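/- Let K be a convex body with the origin in its interior, positive continuous curvature function f_K, and -n ≠ p < 0. Then ∫_{S^{n-1}} f_p(K,u)^{n/(n+p)} dσ(u) equals the supremum over all star bodies L about the origin of n V_p(K,L°)^{n/(n+p)} |L|^{p/(n+p)}. -/

import Mathlib

open MeasureTheory Metric
open scoped RealInnerProductSpace ENNReal NNReal

noncomputable section

/-- A convex body: a convex compact subset of `ℝⁿ` with nonempty interior. -/
def IsConvexBody (n : ℕ) (K : Set (EuclideanSpace ℝ (Fin n))) : Prop :=
  Convex ℝ K ∧ IsCompact K ∧ (interior K).Nonempty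

/-- The support function of `K`. -/
def suppFn (n : ℕ) (K : Set (EuclideanSpace ℝ (Fin n)))
    (u : EuclideanSpace ℝ (Fin n)) : ℝ :=
  sSup ((fun x => ⟪x, u⟫) '' K)

/-- The polar body `K° = {y : ⟨x,y⟩ ≤ 1 for all x ∈ K}`. -/
def polarBody (n : ℕ) (K : Set (EuclideanSpace ℝ (Fin n))) :
    Set (EuclideanSpace ℝ (Fin n)) :=
  {y | ∀ x ∈ K, ⟪x, y⟫ ≤ 1}

/-- The volume of a set, as a real number. -/
def vol (n : ℕ) (A : Set (EuclideanSpace ℝ (Fin n))) : ℝ := (volume A).toReal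

/-- Spherical Lebesgue measure `σ` on the unit sphere `S^{n-1}`, normalized so that
`σ(S^{n-1}) = n ω_n`. -/
def sphMeasure (n : ℕ) : Measure (sphere (0 : EuclideanSpace ℝ (Fin n)) 1) :=
  (volume : Measure (EuclideanSpace ℝ (Fin n))).toSphere

/-- `S` is the surface area measure `S(K,·)` of `K`, characterized by the geometric
description: for any Borel set `A ⊆ S^{n-1}`, `S(K,A)` is the `(n-1)`-Hausdorff measure
of the set of boundary points of `K` having a supporting hyperplane with outer normal
in `A`. -/
def IsSurfaceMeasure (n : ℕ) (K : Set (EuclideanSpace ℝ (Fin n)))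
    (S : Measure (sphere (0 : EuclideanSpace ℝ (Fin n)) 1)) : Prop :=
  ∀ A : Set (sphere (0 : EuclideanSpace ℝ (Fin n)) 1), MeasurableSet A →
    S A = μH[(n : ℝ) - 1] {x | x ∈ frontier K ∧ ∃ u ∈ A, ∀ y ∈ K,
      ⟪y, (u : EuclideanSpace ℝ (Fin n))⟫ ≤ ⟪x, (u : EuclideanSpace ℝ (Fin n))⟫}

/-- The `p`-mixed volume `V_p(K,Q) = (1/n) ∫_{S^{n-1}} h_Q^p h_K^{1-p} dS(K,·)`,
expressed with respect to a surface area measure `S` of `K`. -/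
def mixedVol (n : ℕ) (p : ℝ) (K Q : Set (EuclideanSpace ℝ (Fin n)))
    (S : Measure (sphere (0 : EuclideanSpace ℝ (Fin n)) 1)) : ℝ :=
  (1 / (n : ℝ)) * ∫ u, (suppFn n Q ↑u) ^ p * (suppFn n K ↑u) ^ (1 - p) ∂S

/-- The set of competitors `n V_p(K,Q)^{n/(n+p)} |Q°|^{p/(n+p)}`, `Q` ranging over
convex bodies with the origin in their interior. -/
def geomSet (n : ℕ) (p : ℝ) (K : Set (EuclideanSpace ℝ (Fin n)))
    (S : Measure (sphere (0 : EuclideanSpace ℝ (Fin n)) 1)) : Set ℝ :=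
  {x | ∃ Q, IsConvexBody n Q ∧ (0 : EuclideanSpace ℝ (Fin n)) ∈ interior Q ∧
    x = (n : ℝ) * (mixedVol n p K Q S) ^ ((n : ℝ) / ((n : ℝ) + p)) *
      (vol n (polarBody n Q)) ^ (p / ((n : ℝ) + p))}

/-- The `L_p` geominimal surface area `G̃_p(K)`: an infimum for `p ≥ 0` and a
supremum for `p < 0`. -/
def geomin (n : ℕ) (p : ℝ) (K : Set (EuclideanSpace ℝ (Fin n)))
    (S : Measure (sphere (0 : EuclideanSpace ℝ (Fin n)) 1)) : ℝ :=
  if 0 ≤ p then sInf (geomSet n p K S) else sSup (geomSet n p K S)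

/-- The radial function of `L`. -/
def radFn (n : ℕ) (L : Set (EuclideanSpace ℝ (Fin n)))
    (u : sphere (0 : EuclideanSpace ℝ (Fin n)) 1) : ℝ :=
  sSup {t : ℝ | t • (u : EuclideanSpace ℝ (Fin n)) ∈ L}

/-- `K` is an origin-symmetric ellipsoid. -/
def IsOriginSymmEllipsoid (n : ℕ) (K : Set (EuclideanSpace ℝ (Fin n))) : Prop :=
  ∃ T : EuclideanSpace ℝ (Fin n) ≃ₗ[ℝ] EuclideanSpace ℝ (Fin n),
    K = T '' closedBall (0 : EuclideanSpace ℝ (Fin n)) 1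

/-- `K` has centroid at the origin. -/
def IsCentered (n : ℕ) (K : Set (EuclideanSpace ℝ (Fin n))) : Prop :=
  ∫ x in K, x = (0 : EuclideanSpace ℝ (Fin n))


section Helpers

variable {Ω : Type*} [MeasurableSpace Ω] [TopologicalSpace Ω] [CompactSpace Ω]
  [OpensMeasurableSpace Ω] {μ : Measure Ω} [IsFiniteMeasure μ]

lemma aux_memLp {f : Ω → ℝ} (hf : Continuous f) (q : ℝ≥0∞) : MemLp f q μ :=
  hf.memLp_of_hasCompactSupport ((isClosed_tsupport f).isCompact)

lemma aux_integrable {f : Ω → ℝ} (hf : Continuous f) : Integrable f μ :=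
  memLp_one_iff_integrable.mp (aux_memLp hf 1)

lemma aux_integral_pos (hμ : μ ≠ 0) {f : Ω → ℝ} (hf : Continuous f)
    (hfpos : ∀ x, 0 < f x) : 0 < ∫ x, f x ∂μ := by
  rw [integral_pos_iff_support_of_nonneg (fun x => (hfpos x).le) (aux_integrable hf)]
  have : Function.support f = Set.univ := by
    ext x; simp [(hfpos x).ne']
  rw [this]
  simpa [pos_iff_ne_zero] using fun h => hμ (Measure.measure_univ_eq_zero.mp h)

/-- Reverse Hölder inequality for exponent `α > 1`. -/
lemma aux_rev_holder (hμ : μ ≠ 0) {F G : Ω → ℝ} (hF : Continuous F) (hG : Continuous G)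
    (hFpos : ∀ x, 0 < F x) (hGpos : ∀ x, 0 < G x) {α : ℝ} (hα : 1 < α) :
    (∫ x, F x ∂μ) ^ α * (∫ x, G x ∂μ) ^ (1 - α) ≤ ∫ x, F x ^ α * G x ^ (1 - α) ∂μ := by
  have hα0 : (0:ℝ) < α := lt_trans zero_lt_one hα
  have hα0' : α ≠ 0 := hα0.ne'
  have hα1 : α - 1 ≠ 0 := sub_ne_zero.mpr hα.ne'
  set q : ℝ := α / (α - 1) with hq
  have hpq : α.HolderConjugate q := Real.HolderConjugate.conjExponent hα
  set f : Ω → ℝ := fun x => F x * G x ^ ((1 - α)/α) with hf_def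
  set g : Ω → ℝ := fun x => G x ^ ((α - 1)/α) with hg_def
  have hGne : ∀ x, G x ≠ 0 := fun x => (hGpos x).ne'
  have hfc : Continuous f := hF.mul (hG.rpow_const (fun x => Or.inl (hGne x)))
  have hgc : Continuous g := hG.rpow_const (fun x => Or.inl (hGne x))
  have key := integral_mul_le_Lp_mul_Lq_of_nonneg (μ := μ) hpq
    (Filter.Eventually.of_forall fun x =>
      mul_nonneg (hFpos x).le (Real.rpow_nonneg (hGpos x).le _))
    (Filter.Eventually.of_forall fun x => Real.rpow_nonneg (hGpos x).le _)
    (aux_memLp hfc _) (aux_memLp hgc _)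
  have hfg : ∀ x, f x * g x = F x := by
    intro x
    rw [hf_def, hg_def]
    simp only
    rw [mul_assoc, ← Real.rpow_add (hGpos x)]
    have : (1 - α)/α + (α - 1)/α = 0 := by ring
    rw [this, Real.rpow_zero, mul_one]
  have hfα : ∀ x, f x ^ α = F x ^ α * G x ^ (1 - α) := by
    intro x
    rw [hf_def]
    simp only
    rw [Real.mul_rpow (hFpos x).le (Real.rpow_nonneg (hGpos x).le _),
      ← Real.rpow_mul (hGpos x).le, div_mul_cancel₀ _ hα0']
  have hgq : ∀ x, g x ^ q = G x := by
    intro x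
    rw [hg_def]
    simp only
    rw [← Real.rpow_mul (hGpos x).le]
    have : (α - 1)/α * q = 1 := by rw [hq]; field_simp
    rw [this, Real.rpow_one]
  rw [integral_congr_ae (Filter.Eventually.of_forall hfg)] at key
  rw [integral_congr_ae (Filter.Eventually.of_forall fun x => hfα x)] at key
  rw [integral_congr_ae (Filter.Eventually.of_forall fun x => hgq x)] at key
  -- key : ∫ F ≤ (∫ F^α G^(1-α))^(1/α) * (∫ G)^(1/q)
  set A : ℝ := ∫ x, F x ∂μ with hA
  set B : ℝ := ∫ x, G x ∂μ with hB
  set I : ℝ := ∫ x, F x ^ α * G x ^ (1 - α) ∂μ with hI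
  have hApos : 0 < A := aux_integral_pos hμ hF hFpos
  have hBpos : 0 < B := aux_integral_pos hμ hG hGpos
  have hIpos : 0 < I := aux_integral_pos hμ
    (Continuous.mul (hF.rpow_const fun x => Or.inl (hFpos x).ne')
      (hG.rpow_const fun x => Or.inl (hGne x)))
    (fun x => mul_pos (Real.rpow_pos_of_pos (hFpos x) _) (Real.rpow_pos_of_pos (hGpos x) _))
  -- A ≤ I^(1/α) * B^(1/q)  ⟹  A^α ≤ I * B^(α/q) = I * B^(α-1)
  have h2 : A ^ α ≤ I * B ^ (α - 1) := by
    calc A ^ α ≤ (I ^ (1/α) * B ^ (1/q)) ^ α :=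
          Real.rpow_le_rpow hApos.le key hα0.le
      _ = I * B ^ (α - 1) := by
          rw [Real.mul_rpow (Real.rpow_nonneg hIpos.le _) (Real.rpow_nonneg hBpos.le _),
            ← Real.rpow_mul hIpos.le, ← Real.rpow_mul hBpos.le, one_div_mul_eq_div,
            div_self hα0', Real.rpow_one]
          congr 2
          rw [hq]; field_simp
  calc A ^ α * B ^ (1 - α) ≤ (I * B ^ (α - 1)) * B ^ (1 - α) :=
        mul_le_mul_of_nonneg_right h2 (Real.rpow_nonneg hBpos.le _)
    _ = I := by
        rw [mul_assoc, ← Real.rpow_add hBpos]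
        norm_num

end Helpers

lemma suppFn_continuous (n : ℕ) (K : Set (EuclideanSpace ℝ (Fin n)))
    (hKc : IsCompact K) (hKne : K.Nonempty) : Continuous (suppFn n K) := by
  obtain ⟨R, hR⟩ := hKc.isBounded.subset_closedBall 0
  set R' := max R 0 with hR'def
  have hR'0 : 0 ≤ R' := le_max_right _ _
  have hR' : K ⊆ closedBall 0 R' := hR.trans (closedBall_subset_closedBall (le_max_left _ _))
  have hbdd : ∀ u : EuclideanSpace ℝ (Fin n), BddAbove ((fun x => ⟪x, u⟫) '' K) := fun u =>
    (hKc.image (continuous_id.inner continuous_const)).bddAbove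
  have hkey : ∀ u v : EuclideanSpace ℝ (Fin n),
      suppFn n K u - suppFn n K v ≤ R' * ‖u - v‖ := by
    intro u v
    rw [sub_le_iff_le_add]
    refine csSup_le (hKne.image _) ?_
    rintro y ⟨x, hx, rfl⟩
    have h1 : ⟪x, v⟫ ≤ suppFn n K v := le_csSup (hbdd v) (Set.mem_image_of_mem _ hx)
    have h2 : ⟪x, u - v⟫ ≤ ‖x‖ * ‖u - v‖ := real_inner_le_norm x (u - v)
    have h3 : ‖x‖ ≤ R' := by simpa [mem_closedBall_zero_iff] using hR' hx
    have h4 : ⟪x, u⟫ = ⟪x, v⟫ + ⟪x, u - v⟫ := by rw [inner_sub_right]; ring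
    have h5 : ‖x‖ * ‖u - v‖ ≤ R' * ‖u - v‖ :=
      mul_le_mul_of_nonneg_right h3 (norm_nonneg _)
    simp only
    rw [h4]
    linarith
  have hlip : LipschitzWith (Real.toNNReal R') (suppFn n K) := by
    apply LipschitzWith.of_dist_le_mul
    intro u v
    rw [Real.dist_eq, dist_eq_norm, Real.coe_toNNReal _ hR'0, abs_sub_le_iff]
    refine ⟨hkey u v, ?_⟩
    have := hkey v u
    rwa [norm_sub_rev] at this
  exact hlip.continuous

lemma suppFn_pos (n : ℕ) (K : Set (EuclideanSpace ℝ (Fin n))) (hKc : IsCompact K)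
    (h0 : (0 : EuclideanSpace ℝ (Fin n)) ∈ interior K)
    (u : EuclideanSpace ℝ (Fin n)) (hu : ‖u‖ = 1) : 0 < suppFn n K u := by
  obtain ⟨ε, hε, hball⟩ := Metric.mem_nhds_iff.mp (mem_interior_iff_mem_nhds.mp h0)
  have hmem : (ε/2) • u ∈ K := by
    apply hball
    rw [mem_ball_zero_iff, norm_smul, hu]
    rw [Real.norm_eq_abs, abs_of_pos (by linarith)]
    linarith
  have h1 : ⟪(ε/2) • u, u⟫ = ε/2 := by
    rw [real_inner_smul_left, real_inner_self_eq_norm_mul_norm, hu]; ring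
  have h2 : ⟪(ε/2) • u, u⟫ ≤ suppFn n K u :=
    le_csSup (hKc.image (continuous_id.inner continuous_const)).bddAbove
      (Set.mem_image_of_mem _ hmem)
  rw [h1] at h2
  linarith

lemma sphMeasure_ne_zero {n : ℕ} (hn : 1 ≤ n) : sphMeasure n ≠ 0 := by
  intro h
  have huniv : (sphMeasure n) Set.univ = 0 := by rw [h]; rfl
  rw [sphMeasure, Measure.toSphere_apply_univ] at huniv
  rcases mul_eq_zero.mp huniv with h1 | h2
  · rw [finrank_euclideanSpace_fin] at h1
    simp only [Nat.cast_eq_zero] at h1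
    omega
  · exact absurd h2 (measure_ball_pos volume (0 : EuclideanSpace ℝ (Fin n)) one_pos).ne'


theorem stmt_8 (n : ℕ) (hn : 1 ≤ n) (p : ℝ) (hp : p < 0) (hpn : p ≠ -(n : ℝ))
    (K : Set (EuclideanSpace ℝ (Fin n))) (hK : IsConvexBody n K)
    (h0 : (0 : EuclideanSpace ℝ (Fin n)) ∈ interior K)
    (f : (sphere (0 : EuclideanSpace ℝ (Fin n)) 1) → ℝ) (hf : Continuous f) (hfpos : ∀ u, 0 < f u)
    (hS : IsSurfaceMeasure n K
      ((sphMeasure n).withDensity (fun u => ENNReal.ofReal (f u)))) :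
    ∫ u, ((suppFn n K ↑u) ^ (1 - p) * f u) ^ ((n : ℝ) / ((n : ℝ) + p)) ∂(sphMeasure n) =
      sSup {x : ℝ | ∃ ρ : (sphere (0 : EuclideanSpace ℝ (Fin n)) 1) → ℝ, Continuous ρ ∧ (∀ u, 0 < ρ u) ∧
        x = (n : ℝ) *
          ((1 / (n : ℝ)) * ∫ u, (ρ u) ^ (-p) * ((suppFn n K ↑u) ^ (1 - p) * f u) ∂(sphMeasure n)) ^ ((n : ℝ) / ((n : ℝ) + p)) *
            ((1 / (n : ℝ)) * ∫ u, (ρ u) ^ ((n : ℝ)) ∂(sphMeasure n)) ^ (p / ((n : ℝ) + p))} := by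
  classical
  set σ := sphMeasure n with hσdef
  haveI : IsFiniteMeasure σ :=
    inferInstanceAs (IsFiniteMeasure ((volume : Measure (EuclideanSpace ℝ (Fin n))).toSphere))
  have hσ : σ ≠ 0 := sphMeasure_ne_zero hn
  obtain ⟨hKconv, hKc, hKint⟩ := hK
  have hKne : K.Nonempty := hKint.mono interior_subset
  have hsupp_cont : Continuous fun u : sphere (0 : EuclideanSpace ℝ (Fin n)) 1 =>
      suppFn n K ↑u := (suppFn_continuous n K hKc hKne).comp continuous_subtype_val
  have hsupp_pos : ∀ u : sphere (0 : EuclideanSpace ℝ (Fin n)) 1, 0 < suppFn n K ↑u :=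
    fun u => suppFn_pos n K hKc h0 ↑u (mem_sphere_zero_iff_norm.mp u.2)
  set g : sphere (0 : EuclideanSpace ℝ (Fin n)) 1 → ℝ :=
    fun u => suppFn n K ↑u ^ (1 - p) * f u with hg
  have hgc : Continuous g := (hsupp_cont.rpow_const fun u => Or.inl (hsupp_pos u).ne').mul hf
  have hgpos : ∀ u, 0 < g u :=
    fun u => mul_pos (Real.rpow_pos_of_pos (hsupp_pos u) _) (hfpos u)
  have hn0 : (0:ℝ) < (n:ℝ) := by exact_mod_cast hn
  have hnp : (n:ℝ) + p ≠ 0 := fun h => hpn (by linarith)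
  set α : ℝ := (n:ℝ)/((n:ℝ)+p) with hα
  set β : ℝ := p/((n:ℝ)+p) with hβ
  have hαβ : α + β = 1 := by rw [hα, hβ, ← add_div, div_self hnp]
  set I : ℝ := ∫ u, g u ^ α ∂σ with hI
  have hgac : Continuous fun u => g u ^ α := hgc.rpow_const fun u => Or.inl (hgpos u).ne'
  have hIpos : 0 < I :=
    aux_integral_pos hσ hgac (fun u => Real.rpow_pos_of_pos (hgpos u) _)
  have hub : ∀ ρ : sphere (0 : EuclideanSpace ℝ (Fin n)) 1 → ℝ, Continuous ρ →
      (∀ u, 0 < ρ u) →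
      (n:ℝ) * ((1/(n:ℝ)) * ∫ u, ρ u ^ (-p) * g u ∂σ) ^ α *
        ((1/(n:ℝ)) * ∫ u, ρ u ^ ((n:ℝ)) ∂σ) ^ β ≤ I := by
    intro ρ hρc hρpos
    have hFc : Continuous fun u => ρ u ^ (-p) * g u :=
      (hρc.rpow_const fun u => Or.inl (hρpos u).ne').mul hgc
    have hFpos : ∀ u, 0 < ρ u ^ (-p) * g u :=
      fun u => mul_pos (Real.rpow_pos_of_pos (hρpos u) _) (hgpos u)
    have hGc : Continuous fun u => ρ u ^ ((n:ℝ)) :=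
      hρc.rpow_const fun u => Or.inl (hρpos u).ne'
    have hGpos : ∀ u, 0 < ρ u ^ ((n:ℝ)) := fun u => Real.rpow_pos_of_pos (hρpos u) _
    set A : ℝ := ∫ u, ρ u ^ (-p) * g u ∂σ with hA
    set B : ℝ := ∫ u, ρ u ^ ((n:ℝ)) ∂σ with hB
    have hApos : 0 < A := aux_integral_pos hσ hFc hFpos
    have hBpos : 0 < B := aux_integral_pos hσ hGc hGpos
    have hLHS : (n:ℝ) * ((1/(n:ℝ)) * A) ^ α * ((1/(n:ℝ)) * B) ^ β = A ^ α * B ^ β := by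
      rw [Real.mul_rpow (by positivity) hApos.le, Real.mul_rpow (by positivity) hBpos.le]
      have h1 : ((1:ℝ)/(n:ℝ)) ^ α * ((1:ℝ)/(n:ℝ)) ^ β = 1/(n:ℝ) := by
        rw [← Real.rpow_add (by positivity), hαβ, Real.rpow_one]
      calc (n:ℝ) * ((1/(n:ℝ))^α * A^α) * ((1/(n:ℝ))^β * B^β)
          = ((n:ℝ) * (((1:ℝ)/(n:ℝ))^α * ((1:ℝ)/(n:ℝ))^β)) * (A^α * B^β) := by ring
        _ = A^α * B^β := by rw [h1]; field_simp
    rw [hLHS]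
    rcases lt_or_gt_of_ne hnp with hc | hc
    · have hβ1 : 1 < β := by
        rw [hβ, lt_div_iff_of_neg hc, one_mul]; linarith
      have hrev := aux_rev_holder hσ hGc hFc hGpos hFpos hβ1
      have h1β : 1 - β = α := by linarith
      have hpt : ∀ u, (ρ u ^ ((n:ℝ))) ^ β * (ρ u ^ (-p) * g u) ^ (1 - β) = g u ^ α := by
        intro u
        rw [h1β, Real.mul_rpow (Real.rpow_nonneg (hρpos u).le _) (hgpos u).le,
          ← Real.rpow_mul (hρpos u).le, ← Real.rpow_mul (hρpos u).le,
          ← mul_assoc, ← Real.rpow_add (hρpos u)]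
        have hexp : (n:ℝ) * β + -p * α = 0 := by
          rw [hα, hβ]; field_simp; ring
        rw [hexp, Real.rpow_zero, one_mul]
      rw [integral_congr_ae (Filter.Eventually.of_forall hpt)] at hrev
      rw [h1β, ← hA, ← hB, ← hI] at hrev
      rw [mul_comm (A ^ α) (B ^ β)]
      exact hrev
    · have hα1 : 1 < α := by
        rw [hα]; exact (one_lt_div hc).mpr (by linarith)
      have hrev := aux_rev_holder hσ hFc hGc hFpos hGpos hα1
      have h1α : 1 - α = β := by linarith
      have hpt : ∀ u, (ρ u ^ (-p) * g u) ^ α * (ρ u ^ ((n:ℝ))) ^ (1 - α) = g u ^ α := by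
        intro u
        rw [h1α, Real.mul_rpow (Real.rpow_nonneg (hρpos u).le _) (hgpos u).le,
          ← Real.rpow_mul (hρpos u).le, ← Real.rpow_mul (hρpos u).le,
          mul_comm (ρ u ^ (-p * α)) (g u ^ α), mul_assoc, ← Real.rpow_add (hρpos u)]
        have hexp : -p * α + (n:ℝ) * β = 0 := by
          rw [hα, hβ]; field_simp; ring
        rw [hexp, Real.rpow_zero, mul_one]
      rw [integral_congr_ae (Filter.Eventually.of_forall hpt)] at hrev
      rw [h1α, ← hA, ← hB, ← hI] at hrev
      exact hrev
  have hmem : ∃ ρ : (sphere (0 : EuclideanSpace ℝ (Fin n)) 1) → ℝ, Continuous ρ ∧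
      (∀ u, 0 < ρ u) ∧
      I = (n : ℝ) * ((1 / (n : ℝ)) * ∫ u, (ρ u) ^ (-p) * g u ∂σ) ^ α *
        ((1 / (n : ℝ)) * ∫ u, (ρ u) ^ ((n : ℝ)) ∂σ) ^ β := by
    refine ⟨fun u => g u ^ (1/((n:ℝ)+p)),
      hgc.rpow_const fun u => Or.inl (hgpos u).ne',
      fun u => Real.rpow_pos_of_pos (hgpos u) _, ?_⟩
    have e1 : ∀ u, (g u ^ (1/((n:ℝ)+p))) ^ (-p) * g u = g u ^ α := by
      intro u
      rw [← Real.rpow_mul (hgpos u).le, ← Real.rpow_add_one (hgpos u).ne']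
      congr 1
      rw [hα]; field_simp; ring
    have e2 : ∀ u, (g u ^ (1/((n:ℝ)+p))) ^ ((n:ℝ)) = g u ^ α := by
      intro u
      rw [← Real.rpow_mul (hgpos u).le]
      congr 1
      rw [hα, one_div, inv_mul_eq_div]
    rw [integral_congr_ae (Filter.Eventually.of_forall e1),
      integral_congr_ae (Filter.Eventually.of_forall e2), ← hI]
    have hc0 : 0 < (1/(n:ℝ)) * I := by positivity
    rw [mul_assoc, ← Real.rpow_add hc0, hαβ, Real.rpow_one]
    field_simp
  have hgreat : IsGreatest {x : ℝ | ∃ ρ : (sphere (0 : EuclideanSpace ℝ (Fin n)) 1) → ℝ,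
      Continuous ρ ∧ (∀ u, 0 < ρ u) ∧
      x = (n : ℝ) * ((1 / (n : ℝ)) * ∫ u, (ρ u) ^ (-p) * g u ∂σ) ^ α *
        ((1 / (n : ℝ)) * ∫ u, (ρ u) ^ ((n : ℝ)) ∂σ) ^ β} I := by
    constructor
    · exact hmem
    · rintro x ⟨ρ, hρc, hρpos, rfl⟩
      exact hub ρ hρc hρpos
  exact hgreat.csSup_eq.symm
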